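/- arXiv:1905.08147 — 2 statements merged into one kernel-verified Lean document; each statement's English description precedes it below -/
import Mathlib

section
/- Let φ : G → ℝ be a group homomorphism from a group G. Suppose there exist g₁, g₂, g₃ ∈ G such that φ(g₁), φ(g₂), φ(g₃) are rationally independent real numbers. Then for any a, b ∈ ℝ, the subgroup H_{a,b} = φ⁻¹(aℤ + bℤ) has infinite index in G. -/
/-- If a homomorphism `φ : G → ℝ` takes three rationally independent values, then for
any `a b : ℝ` the preimage of `aℤ + bℤ` is an infinite-index subgroup of `G`. -/
theorem preimage_of_lattice_infinite_index
    {G : Type*} [Group G] (φ : G → ℝ)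
    (hhom : ∀ g h : G, φ (g * h) = φ g + φ h)
    (g₁ g₂ g₃ : G)
    (hindep : ∀ α β γ : ℚ,
      (α : ℝ) * φ g₁ + (β : ℝ) * φ g₂ + (γ : ℝ) * φ g₃ = 0 → α = 0 ∧ β = 0 ∧ γ = 0)
    (a b : ℝ) (H : Subgroup G)
    (hH : ∀ g : G, g ∈ H ↔ ∃ m n : ℤ, φ g = a * (m : ℝ) + b * (n : ℝ)) :
    H.index = 0 := by
  have hone : φ 1 = 0 := by have := hhom 1 1; rw [one_mul] at this; linarith
  have hinv : ∀ g : G, φ g⁻¹ = -φ g := by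
    intro g
    have := hhom g g⁻¹
    rw [mul_inv_cancel, hone] at this
    linarith
  have hpow : ∀ (g : G) (n : ℕ), φ (g ^ n) = n * φ g := by
    intro g n
    induction n with
    | zero => simpa using hone
    | succ k ih => rw [pow_succ, hhom, ih]; push_cast; ring
  haveI hnorm : H.Normal := by
    constructor
    intro x hx h
    rw [hH] at hx ⊢
    obtain ⟨m, n, hmn⟩ := hx
    refine ⟨m, n, ?_⟩
    rw [hhom, hhom, hinv, hmn]; ring
  by_contra hN
  haveI : H.FiniteIndex := ⟨hN⟩
  have key : ∀ g : G, ∃ m n : ℤ, (H.index : ℝ) * φ g = a * m + b * n := by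
    intro g
    have := (hH _).mp (H.pow_index_mem g)
    obtain ⟨m, n, h⟩ := this
    exact ⟨m, n, by rw [← hpow]; exact h⟩
  obtain ⟨m₁, n₁, h₁⟩ := key g₁
  obtain ⟨m₂, n₂, h₂⟩ := key g₂
  obtain ⟨m₃, n₃, h₃⟩ := key g₃
  set v : Fin 3 → ℚ × ℚ := ![((m₁ : ℚ), (n₁ : ℚ)), ((m₂ : ℚ), (n₂ : ℚ)), ((m₃ : ℚ), (n₃ : ℚ))] with hv
  have hdep : ¬ LinearIndependent ℚ v := by
    intro h
    have := h.fintype_card_le_finrank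
    simp [Module.finrank_prod] at this
  rw [Fintype.not_linearIndependent_iff] at hdep
  obtain ⟨f, hsum, i, hi⟩ := hdep
  rw [Fin.sum_univ_three] at hsum
  simp only [hv, Matrix.cons_val_zero, Matrix.cons_val_one, Matrix.head_cons,
    Matrix.cons_val_two, Matrix.tail_cons, Prod.smul_mk, smul_eq_mul,
    Prod.mk_add_mk, Prod.mk_eq_zero] at hsum
  obtain ⟨eqm, eqn⟩ := hsum
  have e1 : (f 0 : ℝ) * m₁ + (f 1 : ℝ) * m₂ + (f 2 : ℝ) * m₃ = 0 := by exact_mod_cast eqm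
  have e2 : (f 0 : ℝ) * n₁ + (f 1 : ℝ) * n₂ + (f 2 : ℝ) * n₃ = 0 := by exact_mod_cast eqn
  have main : ((f 0 * H.index : ℚ) : ℝ) * φ g₁ + ((f 1 * H.index : ℚ) : ℝ) * φ g₂ +
      ((f 2 * H.index : ℚ) : ℝ) * φ g₃ = 0 := by
    push_cast
    linear_combination (f 0 : ℝ) * h₁ + (f 1 : ℝ) * h₂ + (f 2 : ℝ) * h₃ + a * e1 + b * e2
  obtain ⟨z0, z1, z2⟩ := hindep _ _ _ main
  have hNQ : (H.index : ℚ) ≠ 0 := by exact_mod_cast hN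
  apply hi
  fin_cases i
  · exact (mul_eq_zero.mp z0).resolve_right hNQ
  · exact (mul_eq_zero.mp z1).resolve_right hNQ
  · exact (mul_eq_zero.mp z2).resolve_right hNQ
end

section
/- Let G be a group with finite generating set, φ : G → ℝ a function, Λ ∈ ℝ, and write W_n = {g ∈ G : |g| = n}. Suppose the central limit theorem with Berry–Esseen rate holds: (1/#W_n) #{g ∈ W_n : (φ(g) − nΛ)/√n ≤ x} = N_σ(x) + O(n^{-1/2}) uniformly in x, where N_σ is the normal distribution function with variance σ² > 0. If H ⊆ G is a subset on which φ(·) − Λ|·| is bounded, then #(W_n ∩ H)/#W_n = O(n^{-1/2}); in particular the asymptotic density of H in W_n is zero. -/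
/-!
If `|φ(g) − Λ|g|| ≤ M` on `H`, then for `g ∈ W_n ∩ H` the normalised value `(φ(g) − nΛ)/√n` lies in
a window of width `O(n^{-1/2})`. The proportion of `W_n` whose normalised value falls in that window
is at most the increment of `N_σ` across it, which is `O(n^{-1/2})` because the Gaussian density is
bounded, plus twice the Berry–Esseen error `C/√n`.
-/

/-- The word length of `g` with respect to `S ∪ S⁻¹`. -/
noncomputable def wordLength {G : Type*} [Group G] (S : Set G) (g : G) : ℕ :=
  sInf {n | ∃ w : List G, w.length = n ∧ (∀ x ∈ w, x ∈ S ∨ x⁻¹ ∈ S) ∧ w.prod = g}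

open MeasureTheory Set

noncomputable def empiricalCDF {α : Type*} (W : Set α) (X : α → ℝ) (x : ℝ) : ℝ :=
  (Nat.card {w | w ∈ W ∧ X w ≤ x} : ℝ) / Nat.card W

section Counting

variable {α : Type*}

theorem natCard_le_natCard_sub_natCard_of_subset_diff {s t u : Set α} (hs : s.Finite)
    (hts : t ⊆ s) (hu : u ⊆ s \ t) : (Nat.card u : ℝ) ≤ Nat.card s - Nat.card t := by
  simp only [Nat.card_coe_set_eq]
  have hdiff : (s \ t).ncard = s.ncard - t.ncard := Set.ncard_sdiff hts (hs.subset hts)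
  rw [← Nat.cast_sub (Set.ncard_le_ncard hts hs), ← hdiff]
  exact_mod_cast Set.ncard_le_ncard hu hs.sdiff

theorem natCard_div_le_empiricalCDF_sub {W B : Set α} (hW : W.Finite) (X : α → ℝ) {a b : ℝ}
    (hba : b ≤ a) (hB : ∀ w ∈ B, w ∈ W ∧ X w ∈ Ioc b a) :
    (Nat.card B : ℝ) / Nat.card W ≤ empiricalCDF W X a - empiricalCDF W X b := by
  rw [empiricalCDF, empiricalCDF, ← sub_div]
  gcongr
  refine natCard_le_natCard_sub_natCard_of_subset_diff (hW.subset fun w hw => hw.1)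
    (fun w hw => ⟨hw.1, hw.2.trans hba⟩) fun w hw => ⟨⟨(hB w hw).1, (hB w hw).2.2⟩, ?_⟩
  exact fun hle => (hB w hw).2.1.not_ge hle.2

end Counting

theorem integral_Iic_sub_integral_Iic_le {f : ℝ → ℝ} (hf : Integrable f) (hf1 : ∀ t, f t ≤ 1)
    {a b : ℝ} (hba : b ≤ a) : (∫ t in Iic a, f t) - ∫ t in Iic b, f t ≤ a - b := by
  rw [intervalIntegral.integral_Iic_sub_Iic hf.integrableOn hf.integrableOn]
  calc ∫ t in b..a, f t ≤ ∫ _ in b..a, (1 : ℝ) :=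
        intervalIntegral.integral_mono_on hba hf.intervalIntegrable intervalIntegrable_const
          fun t _ => hf1 t
    _ = a - b := by simp

theorem integrable_exp_neg_sq_div {σ : ℝ} (hσ : σ ≠ 0) :
    Integrable fun t : ℝ => Real.exp (-t ^ 2 / (2 * σ ^ 2)) := by
  convert integrable_exp_neg_mul_sq (b := (2 * σ ^ 2)⁻¹) (by positivity) using 2 with t
  ring_nf

theorem gaussianCDF_sub_le {σ : ℝ} (hσ : 0 < σ) {a b : ℝ} (hba : b ≤ a) :
    (Real.sqrt (2 * Real.pi) * σ)⁻¹ * (∫ t in Iic a, Real.exp (-t ^ 2 / (2 * σ ^ 2)))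
      - (Real.sqrt (2 * Real.pi) * σ)⁻¹ * ∫ t in Iic b, Real.exp (-t ^ 2 / (2 * σ ^ 2))
      ≤ (Real.sqrt (2 * Real.pi) * σ)⁻¹ * (a - b) := by
  rw [← mul_sub]
  have hexp_le_one (t : ℝ) : Real.exp (-t ^ 2 / (2 * σ ^ 2)) ≤ 1 :=
    Real.exp_le_one_iff.2 (div_nonpos_of_nonpos_of_nonneg (by nlinarith) (by positivity))
  exact mul_le_mul_of_nonneg_left
    (integral_Iic_sub_integral_Iic_le (integrable_exp_neg_sq_div hσ.ne') hexp_le_one hba)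
    (by positivity)

theorem div_mem_Ioc_of_abs_le {y M s : ℝ} (hs : 0 < s) (hy : |y| ≤ M) :
    y / s ∈ Ioc (-(M + 1) / s) (M / s) := by
  obtain ⟨hlo, hhi⟩ := abs_le.1 hy
  exact ⟨div_lt_div_of_pos_right (by linarith) hs, div_le_div_of_nonneg_right hhi hs.le⟩

theorem density_of_bounded_set_sqrt_decay_general
    {G : Type*} [Group G] (S : Finset G)
    (φ : G → ℝ) (Λ : ℝ) (σ : ℝ) (hσ : 0 < σ)
    (hWfin : ∀ n : ℕ, {g : G | wordLength (S : Set G) g = n}.Finite)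
    (Nσ : ℝ → ℝ)
    (hNσ : ∀ x : ℝ, Nσ x =
      (Real.sqrt (2 * Real.pi) * σ)⁻¹ * ∫ t in Set.Iic x, Real.exp (-t ^ 2 / (2 * σ ^ 2)))
    (C : ℝ)
    (hCLT : ∀ n : ℕ, 1 ≤ n → ∀ x : ℝ,
      |((Nat.card {g : G | wordLength (S : Set G) g = n ∧
            (φ g - n * Λ) / Real.sqrt n ≤ x} : ℝ) /
          (Nat.card {g : G | wordLength (S : Set G) g = n} : ℝ)) - Nσ x|
        ≤ C / Real.sqrt n)
    (H : Set G) (M : ℝ)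
    (hM : ∀ g ∈ H, |φ g - Λ * (wordLength (S : Set G) g : ℝ)| ≤ M) :
    ∃ C' > (0 : ℝ), ∀ n : ℕ, 1 ≤ n →
      (Nat.card {g : G | wordLength (S : Set G) g = n ∧ g ∈ H} : ℝ) /
          (Nat.card {g : G | wordLength (S : Set G) g = n} : ℝ)
        ≤ C' / Real.sqrt n := by
  set c := (Real.sqrt (2 * Real.pi) * σ)⁻¹
  refine ⟨2 * |C| + c * (2 * |M| + 1), by positivity, fun n hn => ?_⟩
  have hsqrt : 0 < Real.sqrt n := Real.sqrt_pos.2 (by exact_mod_cast hn)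
  set a := |M| / Real.sqrt n
  set b := -(|M| + 1) / Real.sqrt n
  have hba : b ≤ a := div_le_div_of_nonneg_right (by linarith [abs_nonneg M]) hsqrt.le
  set X : G → ℝ := fun g => (φ g - n * Λ) / Real.sqrt n
  have hwindow := natCard_div_le_empiricalCDF_sub (hWfin n) X
    (B := {g | wordLength (S : Set G) g = n ∧ g ∈ H}) hba fun g ⟨hgn, hgH⟩ =>
      ⟨hgn, div_mem_Ioc_of_abs_le hsqrt <| by
        simpa [hgn, mul_comm] using (hM g hgH).trans (le_abs_self M)⟩
  have hdist (x : ℝ) :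
      |empiricalCDF {g | wordLength (S : Set G) g = n} X x - Nσ x| ≤ C / Real.sqrt n :=
    hCLT n hn x
  have hNσ_inc : Nσ a - Nσ b ≤ c * (a - b) := by
    simpa only [hNσ] using gaussianCDF_sub_le hσ hba
  have hC : C / Real.sqrt n ≤ |C| / Real.sqrt n := by gcongr; exact le_abs_self C
  calc _ ≤ c * (a - b) + 2 * (|C| / Real.sqrt n) := by
        linarith [(abs_le.1 (hdist a)).2, (abs_le.1 (hdist b)).1]
    _ = (2 * |C| + c * (2 * |M| + 1)) / Real.sqrt n := by simp only [a, b]; ring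

/-- If the central limit theorem with Berry–Esseen rate holds for `φ`, then any subset `H`
on which `φ(·) − Λ|·|` is bounded has density `O(n^{-1/2})` in the spheres `W_n`. -/
theorem density_of_bounded_set_sqrt_decay
    {G : Type*} [Group G] (S : Finset G) (hS : Subgroup.closure (S : Set G) = ⊤)
    (φ : G → ℝ) (Λ : ℝ) (σ : ℝ) (hσ : 0 < σ)
    (hWfin : ∀ n : ℕ, {g : G | wordLength (S : Set G) g = n}.Finite)
    (hWne : ∀ n : ℕ, {g : G | wordLength (S : Set G) g = n}.Nonempty)
    (Nσ : ℝ → ℝ)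
    (hNσ : ∀ x : ℝ, Nσ x =
      (Real.sqrt (2 * Real.pi) * σ)⁻¹ * ∫ t in Set.Iic x, Real.exp (-t ^ 2 / (2 * σ ^ 2)))
    (C : ℝ)
    (hCLT : ∀ n : ℕ, 1 ≤ n → ∀ x : ℝ,
      |((Nat.card {g : G | wordLength (S : Set G) g = n ∧
            (φ g - n * Λ) / Real.sqrt n ≤ x} : ℝ) /
          (Nat.card {g : G | wordLength (S : Set G) g = n} : ℝ)) - Nσ x|
        ≤ C / Real.sqrt n)
    (H : Set G) (M : ℝ)
    (hM : ∀ g ∈ H, |φ g - Λ * (wordLength (S : Set G) g : ℝ)| ≤ M) :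
    ∃ C' > (0 : ℝ), ∀ n : ℕ, 1 ≤ n →
      (Nat.card {g : G | wordLength (S : Set G) g = n ∧ g ∈ H} : ℝ) /
          (Nat.card {g : G | wordLength (S : Set G) g = n} : ℝ)
        ≤ C' / Real.sqrt n :=
  density_of_bounded_set_sqrt_decay_general S φ Λ σ hσ hWfin Nσ hNσ C hCLT H M hM
end
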